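/- (Stability of the distance function.) Let 0 < c₀ < c, a₀ > 0, 0 < d₁ ≤ d₀, T₀ > 0, set T := T₀ + d₀/c, let x, ν ∈ ℝ³, and let f : ℝ → ℝ³ be continuously differentiable with inf_{t∈[0,T]} ‖f t ×₃ ν‖_∞ > 0. Then there exists a constant C₁ > 0, depending only on c, c₀, a₀, d₁, d₀, f, ν and T, such that for all twice continuously differentiable orbits a, ã : ℝ → ℝ³ with ‖deriv a t‖ ≤ c₀, ‖deriv (deriv a) t‖ ≤ a₀, d₁ ≤ ‖x - a t‖ ≤ d₀ (and the same bounds for ã) for all t, the distance functions v(t) := ‖x - a t‖ and ṽ(t) := ‖x - ã t‖ and the tangential fields Hν, H̃ν of the orbits a, ã satisfy sup_{t∈[0,T₀]} |v t − ṽ t| ≤ C₁ · sup_{s∈[0,T]} ‖Hν s − H̃ν s‖_∞. -/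

import Mathlib

/-!
Write `v(t) = ‖x - a t‖`, `n(t) = ‖f t ×₃ ν‖_∞` and let `p` be the retarded time, the inverse of
the arrival time `t ↦ t + v t / c` (strictly increasing because `|v'| ≤ c₀ < c`). Since
`‖Hν s‖_∞ = c n(p s) / (4π v(p s) (c + v'(p s)))`, `v(p s) = c (s - p s)` and
`p' = c / (c + v'(p))`, the retarded time solves the scalar ODE
`p' = 4π c ‖Hν s‖_∞ (s - p) / n(p)`, whose right-hand side is Lipschitz in `p` because `n` is
Lipschitz and bounded below by `η > 0`. The retarded time of the second orbit solves the same ODE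
up to an error `O(S)`, `S = sup ‖Hν - H̃ν‖_∞`, so Grönwall's inequality gives `|p - p̃| = O(S)`, and
then `|v - ṽ| ≤ (c + c₀) |p - p̃|`. Both retarded times start from the same arrival time
`v 0 / c = ṽ 0 / c`: otherwise one field vanishes where the other is bounded below, forcing `S`
to be large, a case in which the claim holds trivially as `|v - ṽ| ≤ d₀`.
-/

noncomputable section

abbrev E3 := EuclideanSpace ℝ (Fin 3)

/-- The cross product on `ℝ³`. -/
def cross3 (u v : E3) : E3 :=
  WithLp.toLp 2 ![u 1 * v 2 - u 2 * v 1, u 2 * v 0 - u 0 * v 2, u 0 * v 1 - u 1 * v 0]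

/-- The maximum norm `‖y‖_∞ = maximum over i of |y i|` on `ℝ³`. -/
def ninf (y : E3) : ℝ := ⨆ i : Fin 3, |y i|

/-- `Hν` is the tangential field of the orbit `a` (relative to the observation point `x`,
the source profile `f` and the vector `ν`, with wave speed `c`). -/
def tangentialField (c : ℝ) (x : E3) (a f : ℝ → E3) (ν : E3) (Hν : ℝ → E3) : Prop :=
  (∀ s : ℝ, s < ‖x - a 0‖ / c → Hν s = 0) ∧
  (∀ t : ℝ, 0 ≤ t →
    Hν (t + ‖x - a t‖ / c) =
      (c / (4 * Real.pi * ‖x - a t‖ * (c + deriv (fun r : ℝ => ‖x - a r‖) t))) •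
        cross3 (f t) ν)

open Set Real
open scoped NNReal

lemma ninf_eq_norm_ofLp (y : E3) : ninf y = ‖WithLp.ofLp y‖ := by
  have hbdd : BddAbove (range fun i : Fin 3 => |y i|) := (finite_range _).bddAbove
  refine le_antisymm (ciSup_le fun i => ?_) ?_
  · exact (Real.norm_eq_abs _).symm.trans_le (norm_le_pi_norm (WithLp.ofLp y) i)
  · refine (pi_norm_le_iff_of_nonneg ((abs_nonneg _).trans (le_ciSup hbdd 0))).2 fun i => ?_
    exact (Real.norm_eq_abs _).trans_le (le_ciSup hbdd i)

lemma ninf_smul (r : ℝ) (y : E3) : ninf (r • y) = |r| * ninf y := by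
  simp only [ninf_eq_norm_ofLp, WithLp.ofLp_smul, norm_smul, Real.norm_eq_abs]

lemma ninf_sub_le (y z : E3) : ninf (y - z) ≤ ninf y + ninf z := by
  simpa only [ninf_eq_norm_ofLp, WithLp.ofLp_sub] using norm_sub_le _ _

lemma abs_ninf_sub_ninf_le (y z : E3) : |ninf y - ninf z| ≤ ninf (y - z) := by
  simpa only [ninf_eq_norm_ofLp, WithLp.ofLp_sub] using abs_norm_sub_norm_le _ _

structure ProfileBounds (T η M : ℝ) (L : ℝ≥0) (n : ℝ → ℝ) : Prop where
  pos : 0 < η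
  le_apply : ∀ t ∈ Icc 0 T, η ≤ n t
  apply_le : ∀ t ∈ Icc 0 T, n t ≤ M
  lipschitzOnWith : LipschitzOnWith L n (Icc 0 T)

lemma exists_profileBounds {f : ℝ → E3} (hf : ContDiff ℝ 1 f) (ν : E3) {T : ℝ}
    (hη : 0 < sInf ((fun t => ninf (cross3 (f t) ν)) '' Icc 0 T)) :
    ∃ M L, ProfileBounds T (sInf ((fun t => ninf (cross3 (f t) ν)) '' Icc 0 T)) M L
      (fun t => ninf (cross3 (f t) ν)) := by
  set n := fun t => ninf (cross3 (f t) ν)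
  let A : E3 →L[ℝ] Fin 3 → ℝ := LinearMap.toContinuousLinearMap
    ((crossProduct.flip (WithLp.ofLp ν)).comp (WithLp.linearEquiv 2 ℝ (Fin 3 → ℝ)).toLinearMap)
  have hnA : n = norm ∘ A ∘ f := by
    ext t
    simp only [n, Function.comp_apply, ninf_eq_norm_ofLp]
    rfl
  obtain ⟨K, hK⟩ :=
    hf.locallyLipschitz.locallyLipschitzOn.exists_lipschitzOnWith_of_compact isCompact_Icc
  have hL : LipschitzOnWith (1 * (‖A‖₊ * K)) n (Icc 0 T) :=
    hnA ▸ lipschitzWith_one_norm.comp_lipschitzOnWith (A.lipschitz.comp_lipschitzOnWith hK)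
  obtain ⟨M, hM⟩ := isCompact_Icc.bddAbove_image hL.continuousOn
  have hbdd : BddBelow (n '' Icc 0 T) := ⟨0, by
    rintro _ ⟨t, -, rfl⟩
    simp only [n, ninf_eq_norm_ofLp]
    positivity⟩
  exact ⟨M, _, hη, fun t ht => csInf_le hbdd (mem_image_of_mem n ht),
    fun t ht => hM (mem_image_of_mem n ht), hL⟩

structure IsAdmissibleDistance (c₀ d₁ d₀ : ℝ) (v : ℝ → ℝ) : Prop where
  differentiable : Differentiable ℝ v
  abs_deriv_le : ∀ t, |deriv v t| ≤ c₀
  lower : ∀ t, d₁ ≤ v t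
  upper : ∀ t, v t ≤ d₀

lemma isAdmissibleDistance_norm_sub {E : Type*} [NormedAddCommGroup E] [InnerProductSpace ℝ E]
    {x : E} {a : ℝ → E} {c₀ d₁ d₀ : ℝ} (ha : Differentiable ℝ a) (hda : ∀ t, ‖deriv a t‖ ≤ c₀)
    (hd₁ : 0 < d₁) (hd : ∀ t, d₁ ≤ ‖x - a t‖ ∧ ‖x - a t‖ ≤ d₀) :
    IsAdmissibleDistance c₀ d₁ d₀ (fun t => ‖x - a t‖) := by
  have hlip : ∀ s t, ‖‖x - a t‖ - ‖x - a s‖‖ ≤ c₀ * ‖t - s‖ := fun s t =>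
    calc ‖‖x - a t‖ - ‖x - a s‖‖ ≤ ‖(x - a t) - (x - a s)‖ := abs_norm_sub_norm_le _ _
      _ = ‖a t - a s‖ := by rw [sub_sub_sub_cancel_left, norm_sub_rev]
      _ ≤ c₀ * ‖t - s‖ := convex_univ.norm_image_sub_le_of_norm_deriv_le
          (fun u _ => ha u) (fun u _ => hda u) (mem_univ s) (mem_univ t)
  have hdiff : Differentiable ℝ fun t => ‖x - a t‖ := fun t =>
    ((ha t).const_sub x).norm ℝ (norm_pos_iff.1 (hd₁.trans_le (hd t).1))
  refine ⟨hdiff, fun t => ?_, fun t => (hd t).1, fun t => (hd t).2⟩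
  simpa using (hdiff t).hasDerivAt.le_of_lip' ((norm_nonneg _).trans (hda 0))
    (Filter.Eventually.of_forall fun s => hlip t s)

namespace IsAdmissibleDistance

variable {c c₀ d₁ d₀ : ℝ} {v : ℝ → ℝ}

lemma abs_sub_le (hv : IsAdmissibleDistance c₀ d₁ d₀ v) (s t : ℝ) :
    |v t - v s| ≤ c₀ * |t - s| := by
  simpa using convex_univ.norm_image_sub_le_of_norm_deriv_le (fun u _ => hv.differentiable u)
    (fun u _ => by simpa using hv.abs_deriv_le u) (mem_univ s) (mem_univ t)

lemma add_deriv_pos (hv : IsAdmissibleDistance c₀ d₁ d₀ v) (hc : c₀ < c) (t : ℝ) :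
    0 < c + deriv v t := by
  linarith [neg_abs_le (deriv v t), hv.abs_deriv_le t]

lemma pos_of_lt (hv : IsAdmissibleDistance c₀ d₁ d₀ v) (hc : c₀ < c) : 0 < c :=
  ((abs_nonneg _).trans (hv.abs_deriv_le 0)).trans_lt hc

lemma hasDerivAt_arrival (hv : IsAdmissibleDistance c₀ d₁ d₀ v) (c t : ℝ) :
    HasDerivAt (fun t => t + v t / c) (1 + deriv v t / c) t :=
  (hasDerivAt_id t).add ((hv.differentiable t).hasDerivAt.div_const c)

lemma strictMono_arrival (hv : IsAdmissibleDistance c₀ d₁ d₀ v) (hc : c₀ < c) :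
    StrictMono fun t => t + v t / c := by
  have hc_pos : 0 < c := hv.pos_of_lt hc
  refine strictMono_of_deriv_pos fun t => ?_
  rw [(hv.hasDerivAt_arrival c t).deriv, one_add_div hc_pos.ne']
  exact div_pos (hv.add_deriv_pos hc t) hc_pos

end IsAdmissibleDistance

structure IsRetardedTime (c : ℝ) (v p : ℝ → ℝ) : Prop where
  apply_arrival : ∀ t, p (t + v t / c) = t
  arrival_apply : ∀ s, p s + v (p s) / c = s
  monotone : Monotone p
  hasDerivAt : ∀ s, HasDerivAt p (c / (c + deriv v (p s))) s

lemma IsAdmissibleDistance.exists_isRetardedTime {c c₀ d₁ d₀ : ℝ} {v : ℝ → ℝ}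
    (hv : IsAdmissibleDistance c₀ d₁ d₀ v) (hc : c₀ < c) : ∃ p, IsRetardedTime c v p := by
  have hc_pos : 0 < c := hv.pos_of_lt hc
  set g : ℝ → ℝ := fun t => t + v t / c
  have hmono : StrictMono g := hv.strictMono_arrival hc
  have hsurj : Function.Surjective g := by
    refine Continuous.surjective (continuous_id.add (hv.differentiable.continuous.div_const c))
      (Filter.tendsto_atTop_add_right_of_le _ (d₁ / c) Filter.tendsto_id fun t => ?_)
      (Filter.tendsto_atBot_add_right_of_ge _ (d₀ / c) Filter.tendsto_id fun t => ?_)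
    · exact div_le_div_of_nonneg_right (hv.lower t) hc_pos.le
    · exact div_le_div_of_nonneg_right (hv.upper t) hc_pos.le
  let e := hmono.orderIsoOfSurjective g hsurj
  refine ⟨e.symm, hmono.orderIsoOfSurjective_symm_apply_self g hsurj,
    hmono.orderIsoOfSurjective_self_symm_apply g hsurj, e.symm.monotone, fun s => ?_⟩
  have hd : HasDerivAt g ((c + deriv v (e.symm s)) / c) (e.symm s) := by
    simpa only [one_add_div hc_pos.ne'] using hv.hasDerivAt_arrival c (e.symm s)
  simpa only [inv_div] using hd.of_local_left_inverse e.symm.continuous.continuousAt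
    (div_pos (hv.add_deriv_pos hc _) hc_pos).ne'
    (Filter.Eventually.of_forall (hmono.orderIsoOfSurjective_self_symm_apply g hsurj))

namespace IsRetardedTime

variable {c T : ℝ} {v p : ℝ → ℝ}

lemma sub_eq (hp : IsRetardedTime c v p) (s : ℝ) : s - p s = v (p s) / c := by
  linarith [hp.arrival_apply s]

lemma continuous (hp : IsRetardedTime c v p) : Continuous p :=
  continuous_iff_continuousAt.2 fun s => (hp.hasDerivAt s).continuousAt

lemma apply_arrival_zero (hp : IsRetardedTime c v p) : p (v 0 / c) = 0 := by
  simpa using hp.apply_arrival 0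

lemma nonneg (hp : IsRetardedTime c v p) {s : ℝ} (hs : v 0 / c ≤ s) : 0 ≤ p s :=
  hp.apply_arrival_zero ▸ hp.monotone hs

lemma mapsTo (hp : IsRetardedTime c v p) (hc : 0 < c) (hv : ∀ t, 0 ≤ v t) :
    MapsTo p (Icc (v 0 / c) T) (Icc 0 T) := fun s hs =>
  ⟨hp.nonneg hs.1, by linarith [hp.sub_eq s, div_nonneg (hv (p s)) hc.le, hs.2]⟩

end IsRetardedTime

lemma abs_sub_le_of_isRetardedTime {c c₀ d₁ d₀ : ℝ} {v v' p q : ℝ → ℝ} (hc : 0 < c)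
    (hv' : IsAdmissibleDistance c₀ d₁ d₀ v') (hp : IsRetardedTime c v p)
    (hq : IsRetardedTime c v' q) (s : ℝ) :
    |v (p s) - v' (p s)| ≤ (c + c₀) * |p s - q s| := by
  have hvp : v (p s) = c * (s - p s) := by rw [hp.sub_eq]; field_simp
  have hvq : v' (q s) = c * (s - q s) := by rw [hq.sub_eq]; field_simp
  calc |v (p s) - v' (p s)| ≤ |v (p s) - v' (q s)| + |v' (q s) - v' (p s)| := abs_sub_le _ _ _
    _ ≤ c * |p s - q s| + c₀ * |p s - q s| := by
      gcongr
      · rw [hvp, hvq, ← mul_sub, abs_mul, abs_of_pos hc, sub_sub_sub_cancel_left, abs_sub_comm]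
      · rw [abs_sub_comm (p s)]
        exact hv'.abs_sub_le _ _
    _ = (c + c₀) * |p s - q s| := by ring

def retardedFactor (c : ℝ) (v : ℝ → ℝ) (t : ℝ) : ℝ := c / (4 * π * v t * (c + deriv v t))

namespace IsAdmissibleDistance

variable {c c₀ d₁ d₀ : ℝ} {v : ℝ → ℝ}

lemma retardedFactor_pos (hv : IsAdmissibleDistance c₀ d₁ d₀ v) (hd₁ : 0 < d₁) (hc : c₀ < c)
    (t : ℝ) : 0 < retardedFactor c v t :=
  div_pos (hv.pos_of_lt hc)
    (mul_pos (mul_pos (by positivity) (hd₁.trans_le (hv.lower t))) (hv.add_deriv_pos hc t))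

lemma retardedFactor_mem_Icc (hv : IsAdmissibleDistance c₀ d₁ d₀ v) (hd₁ : 0 < d₁)
    (hc : c₀ < c) (t : ℝ) :
    retardedFactor c v t ∈ Icc (c / (4 * π * d₀ * (c + c₀))) (c / (4 * π * d₁ * (c - c₀))) := by
  have hc_pos : 0 < c := hv.pos_of_lt hc
  have hcv := hv.add_deriv_pos hc t
  have hv' := abs_le.1 (hv.abs_deriv_le t)
  have hvt := hv.lower t
  constructor
  · apply div_le_div_of_nonneg_left hc_pos.le
      (mul_pos (mul_pos (by positivity) (hd₁.trans_le hvt)) hcv)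
    have : v t * (c + deriv v t) ≤ d₀ * (c + c₀) :=
      mul_le_mul (hv.upper t) (by linarith) hcv.le (hd₁.le.trans (hvt.trans (hv.upper t)))
    nlinarith [pi_pos]
  · apply div_le_div_of_nonneg_left hc_pos.le (mul_pos (mul_pos (by positivity) hd₁) (sub_pos.2 hc))
    have : d₁ * (c - c₀) ≤ v t * (c + deriv v t) :=
      mul_le_mul hvt (by linarith) (by linarith) (hd₁.le.trans hvt)
    nlinarith [pi_pos]

end IsAdmissibleDistance

structure IsRetardedSignal (c : ℝ) (v n h : ℝ → ℝ) : Prop where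
  eq_zero_of_lt : ∀ s, s < v 0 / c → h s = 0
  arrival_eq : ∀ t, 0 ≤ t → h (t + v t / c) = retardedFactor c v t * n t

lemma tangentialField.isRetardedSignal {c : ℝ} {x ν : E3} {a f H : ℝ → E3}
    (hH : tangentialField c x a f ν H) (hc : 0 ≤ c)
    (hcv : ∀ t, 0 ≤ c + deriv (fun r => ‖x - a r‖) t) :
    IsRetardedSignal c (fun t => ‖x - a t‖) (fun t => ninf (cross3 (f t) ν))
      (fun s => ninf (H s)) where
  eq_zero_of_lt s hs := by simp [hH.1 s hs, ninf_eq_norm_ofLp]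
  arrival_eq t ht := by
    rw [hH.2 t ht, ninf_smul, abs_of_nonneg (div_nonneg hc (by have := hcv t; positivity))]
    rfl

namespace IsRetardedSignal

variable {c c₀ d₁ d₀ T η M : ℝ} {L : ℝ≥0} {v v' n h h' p : ℝ → ℝ}

lemma apply_eq (hh : IsRetardedSignal c v n h) (hp : IsRetardedTime c v p) {s : ℝ}
    (hs : v 0 / c ≤ s) : h s = retardedFactor c v (p s) * n (p s) := by
  rw [← hh.arrival_eq _ (hp.nonneg hs), hp.arrival_apply]

lemma abs_le (hh : IsRetardedSignal c v n h) (hv : IsAdmissibleDistance c₀ d₁ d₀ v)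
    (hd₁ : 0 < d₁) (hc : c₀ < c) (hn : ProfileBounds T η M L n) {s : ℝ} (hs : s ∈ Icc 0 T) :
    |h s| ≤ c / (4 * π * d₁ * (c - c₀)) * M := by
  have hc_pos : 0 < c := hv.pos_of_lt hc
  have hM : 0 ≤ M := hn.pos.le.trans
    ((hn.le_apply 0 ⟨le_rfl, hs.1.trans hs.2⟩).trans (hn.apply_le 0 ⟨le_rfl, hs.1.trans hs.2⟩))
  have hmax : 0 ≤ c / (4 * π * d₁ * (c - c₀)) :=
    div_nonneg hc_pos.le (mul_nonneg (by positivity) (sub_pos.2 hc).le)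
  rcases lt_or_ge s (v 0 / c) with hlt | hge
  · rw [hh.eq_zero_of_lt s hlt, abs_zero]
    positivity
  obtain ⟨p, hp⟩ := hv.exists_isRetardedTime hc
  have hps := hp.mapsTo hc_pos (fun t => hd₁.le.trans (hv.lower t)) ⟨hge, hs.2⟩
  rw [hh.apply_eq hp hge, abs_mul, abs_of_pos (hv.retardedFactor_pos hd₁ hc _),
    abs_of_pos (hn.pos.trans_le (hn.le_apply _ hps))]
  exact mul_le_mul (hv.retardedFactor_mem_Icc hd₁ hc _).2 (hn.apply_le _ hps)
    (hn.pos.trans_le (hn.le_apply _ hps)).le hmax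

lemma le_apply (hh : IsRetardedSignal c v n h) (hv : IsAdmissibleDistance c₀ d₁ d₀ v)
    (hd₁ : 0 < d₁) (hc : c₀ < c) (hn : ProfileBounds T η M L n) {s : ℝ}
    (hs : s ∈ Icc (v 0 / c) T) : c / (4 * π * d₀ * (c + c₀)) * η ≤ h s := by
  obtain ⟨p, hp⟩ := hv.exists_isRetardedTime hc
  have hps := hp.mapsTo (hv.pos_of_lt hc) (fun t => hd₁.le.trans (hv.lower t)) hs
  rw [hh.apply_eq hp hs.1]
  exact mul_le_mul (hv.retardedFactor_mem_Icc hd₁ hc _).1 (hn.le_apply _ hps) hn.pos.le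
    (hv.retardedFactor_pos hd₁ hc _).le

lemma le_of_abs_sub_lt (hh : IsRetardedSignal c v n h) (hh' : IsRetardedSignal c v' n h')
    (hv' : IsAdmissibleDistance c₀ d₁ d₀ v') (hd₁ : 0 < d₁) (hc : c₀ < c)
    (hn : ProfileBounds T η M L n) (hT : d₀ / c ≤ T)
    (hS : ∀ s ∈ Icc 0 T, |h s - h' s| < c / (4 * π * d₀ * (c + c₀)) * η) : v 0 ≤ v' 0 := by
  have hc_pos : 0 < c := hv'.pos_of_lt hc
  -- otherwise, at the arrival time `v' 0 / c` the signal `h` still vanishes but `h'` does not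
  by_contra! hlt
  have hs : v' 0 / c ∈ Icc (v' 0 / c) T :=
    ⟨le_rfl, (div_le_div_of_nonneg_right (hv'.upper 0) hc_pos.le).trans hT⟩
  have hS₀ := hS _ ⟨div_nonneg (hd₁.le.trans (hv'.lower 0)) hc_pos.le, hs.2⟩
  rw [hh.eq_zero_of_lt _ (div_lt_div_of_pos_right hlt hc_pos), zero_sub, abs_neg] at hS₀
  exact (hh'.le_apply hv' hd₁ hc hn hs).not_gt (hS₀.trans_le' (le_abs_self _))

lemma eq_of_abs_sub_lt (hh : IsRetardedSignal c v n h) (hh' : IsRetardedSignal c v' n h')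
    (hv : IsAdmissibleDistance c₀ d₁ d₀ v) (hv' : IsAdmissibleDistance c₀ d₁ d₀ v')
    (hd₁ : 0 < d₁) (hc : c₀ < c) (hn : ProfileBounds T η M L n) (hT : d₀ / c ≤ T)
    (hS : ∀ s ∈ Icc 0 T, |h s - h' s| < c / (4 * π * d₀ * (c + c₀)) * η) : v 0 = v' 0 :=
  (hh.le_of_abs_sub_lt hh' hv' hd₁ hc hn hT hS).antisymm
    (hh'.le_of_abs_sub_lt hh hv hd₁ hc hn hT fun s hs => abs_sub_comm (h s) _ ▸ hS s hs)

end IsRetardedSignal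

lemma ProfileBounds.lipschitzOnWith_sub_div {T η M s : ℝ} {L : ℝ≥0} {n : ℝ → ℝ}
    (hn : ProfileBounds T η M L n) (hs : s ∈ Icc 0 T) :
    LipschitzOnWith (Real.toNNReal (1 / η + T * L / η ^ 2)) (fun y => (s - y) / n y)
      (Icc 0 T) := by
  refine LipschitzOnWith.of_dist_le' fun y hy y' hy' => ?_
  have hny := hn.le_apply y hy
  have hny' := hn.le_apply y' hy'
  have hη := hn.pos
  have hT : 0 ≤ T := hs.1.trans hs.2
  have hnL : |n y' - n y| ≤ L * |y - y'| := by
    simpa only [Real.dist_eq, abs_sub_comm (n y)] using hn.lipschitzOnWith.dist_le_mul y hy y' hy'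
  have hsy' : |s - y'| ≤ T :=
    abs_sub_le_iff.2 ⟨by linarith [hy'.1, hs.2], by linarith [hy'.2, hs.1]⟩
  simp only [Real.dist_eq]
  calc |(s - y) / n y - (s - y') / n y'|
      = |(y' - y) / n y + (s - y') * (n y' - n y) / (n y * n y')| := by
        have := (hη.trans_le hny).ne'
        have := (hη.trans_le hny').ne'
        congr 1
        field_simp
        ring
    _ ≤ |y - y'| / n y + |s - y'| * |n y' - n y| / (n y * n y') := by
        refine (abs_add_le _ _).trans ?_
        rw [abs_div, abs_div, abs_mul, abs_sub_comm y', abs_of_pos (hη.trans_le hny),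
          abs_of_pos (mul_pos (hη.trans_le hny) (hη.trans_le hny'))]
    _ ≤ |y - y'| / η + T * (L * |y - y'|) / η ^ 2 := by
        gcongr ?_ + ?_
        · exact div_le_div_of_nonneg_left (abs_nonneg _) hη hny
        · refine div_le_div₀ (by positivity) (mul_le_mul hsy' hnL (abs_nonneg _) hT)
            (by positivity) ?_
          rw [sq]
          exact mul_le_mul hny hny' hη.le (hη.le.trans hny)
    _ = (1 / η + T * L / η ^ 2) * |y - y'| := by ring

/-- The retarded time `p` of a signal `h` solves `p' = signalField c h n s p`: since
`v (p s) = c (s - p s)`, the factor `4π c (s - p s) / n (p s)` turns `h s` into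
`c / (c + v' (p s))`. -/
def signalField (c : ℝ) (h n : ℝ → ℝ) (s y : ℝ) : ℝ := 4 * π * c * h s * ((s - y) / n y)

lemma lipschitzOnWith_signalField {c T η M B s : ℝ} {L : ℝ≥0} {n h : ℝ → ℝ} (hc : 0 ≤ c)
    (hn : ProfileBounds T η M L n) (hs : s ∈ Icc 0 T) (hB : |h s| ≤ B) :
    LipschitzOnWith (Real.toNNReal (4 * π * c * B * (1 / η + T * L / η ^ 2)))
      (signalField c h n s) (Icc 0 T) := by
  have hg := hn.lipschitzOnWith_sub_div hs
  have hK : 0 ≤ 1 / η + T * L / η ^ 2 := by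
    have := hn.pos
    have : 0 ≤ T := hs.1.trans hs.2
    positivity
  refine LipschitzOnWith.of_dist_le' fun y hy y' hy' => ?_
  calc dist (signalField c h n s y) (signalField c h n s y')
      = |4 * π * c * h s| * dist ((s - y) / n y) ((s - y') / n y') := by
        simp only [signalField, Real.dist_eq, ← mul_sub, abs_mul]
    _ ≤ 4 * π * c * B * ((1 / η + T * L / η ^ 2) * dist y y') := by
        have hB' : |4 * π * c * h s| ≤ 4 * π * c * B := by
          rw [abs_mul, abs_of_nonneg (by positivity : 0 ≤ 4 * π * c)]
          exact mul_le_mul_of_nonneg_left hB (by positivity)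
        have := (abs_nonneg _).trans hB
        refine mul_le_mul hB' ?_ dist_nonneg (by positivity)
        simpa only [Real.coe_toNNReal _ hK] using hg.dist_le_mul y hy y' hy'
    _ = _ := by ring

lemma abs_signalField_sub_signalField_le {c d₀ η S s y : ℝ} {n h h' : ℝ → ℝ} (hc : 0 < c)
    (hη : 0 < η) (hy : η ≤ n y) (hsy : 0 ≤ s - y) (hsy' : s - y ≤ d₀ / c)
    (hS : |h s - h' s| ≤ S) :
    |signalField c h' n s y - signalField c h n s y| ≤ 4 * π * d₀ / η * S := by
  have hny := hη.trans_le hy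
  have hS₀ : 0 ≤ S := (abs_nonneg _).trans hS
  calc |signalField c h' n s y - signalField c h n s y|
      = 4 * π * c * |h s - h' s| * ((s - y) / n y) := by
        rw [signalField, signalField, ← sub_mul, ← mul_sub, abs_mul, abs_mul, abs_sub_comm,
          abs_of_pos (by positivity : 0 < 4 * π * c), abs_of_nonneg (div_nonneg hsy hny.le)]
    _ ≤ 4 * π * c * S * (d₀ / c / η) := by
        have := hsy.trans hsy'
        gcongr
    _ = 4 * π * d₀ / η * S := by field_simp

lemma gronwallBound_zero_mul (K ε S x : ℝ) :
    gronwallBound 0 K (ε * S) x = gronwallBound 0 K ε x * S := by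
  rcases eq_or_ne K 0 with rfl | hK
  · simp only [gronwallBound_K0]
    ring
  · simp only [gronwallBound_of_K_ne_0 hK]
    ring

namespace IsRetardedSignal

variable {c c₀ d₁ d₀ T η M B S s : ℝ} {L : ℝ≥0} {v v' n h h' p q : ℝ → ℝ}

lemma hasDerivAt_signalField (hh : IsRetardedSignal c v n h)
    (hv : IsAdmissibleDistance c₀ d₁ d₀ v) (hd₁ : 0 < d₁) (hc : c₀ < c)
    (hp : IsRetardedTime c v p) (hs : v 0 / c ≤ s) (hn : n (p s) ≠ 0) :
    HasDerivAt p (signalField c h n s (p s)) s := by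
  convert hp.hasDerivAt s using 1
  have := (hv.pos_of_lt hc).ne'
  have := (hd₁.trans_le (hv.lower (p s))).ne'
  have := (hv.add_deriv_pos hc (p s)).ne'
  rw [signalField, hh.apply_eq hp hs, hp.sub_eq, retardedFactor]
  field_simp

lemma abs_retardedTime_sub_le (hh : IsRetardedSignal c v n h)
    (hh' : IsRetardedSignal c v' n h') (hv : IsAdmissibleDistance c₀ d₁ d₀ v)
    (hv' : IsAdmissibleDistance c₀ d₁ d₀ v') (hd₁ : 0 < d₁) (hc : c₀ < c)
    (hn : ProfileBounds T η M L n) (hB : ∀ s ∈ Icc 0 T, |h s| ≤ B) (hp : IsRetardedTime c v p)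
    (hq : IsRetardedTime c v' q) (h0 : v 0 = v' 0) (hS : ∀ s ∈ Icc 0 T, |h s - h' s| ≤ S)
    (hs : s ∈ Icc (v 0 / c) T) :
    |p s - q s| ≤
      gronwallBound 0 (4 * π * c * B * (1 / η + T * L / η ^ 2)) (4 * π * d₀ / η) T * S := by
  set K := 4 * π * c * B * (1 / η + T * L / η ^ 2)
  set ε := 4 * π * d₀ / η
  have hc_pos : 0 < c := hv.pos_of_lt hc
  have hs₀ : 0 ≤ v 0 / c := div_nonneg (hd₁.le.trans (hv.lower 0)) hc_pos.le
  have hIco : Ico (v 0 / c) T ⊆ Icc 0 T := Ico_subset_Icc_self.trans (Icc_subset_Icc_left hs₀)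
  have hpT := (hp.mapsTo (T := T) hc_pos fun t => hd₁.le.trans (hv.lower t)).mono_left
    Ico_subset_Icc_self
  have hqT := (h0 ▸ hq.mapsTo (T := T) hc_pos fun t => hd₁.le.trans (hv'.lower t)).mono_left
    Ico_subset_Icc_self
  have hn0 : ∀ t ∈ Icc 0 T, n t ≠ 0 := fun t ht => (hn.pos.trans_le (hn.le_apply t ht)).ne'
  have hS₀ : 0 ≤ S := (abs_nonneg _).trans (hS s (Icc_subset_Icc_left hs₀ hs))
  have hd₀ : 0 ≤ d₀ := hd₁.le.trans ((hv.lower 0).trans (hv.upper 0))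
  have hK : 0 ≤ K := by
    have := (abs_nonneg _).trans (hB s (Icc_subset_Icc_left hs₀ hs))
    have := hn.pos
    have : 0 ≤ T := hs₀.trans (hs.1.trans hs.2)
    positivity
  have hpODE : ∀ u ∈ Ico (v 0 / c) T,
      HasDerivWithinAt p (signalField c h n u (p u)) (Ici u) u := fun u hu =>
    (hh.hasDerivAt_signalField hv hd₁ hc hp hu.1 (hn0 _ (hpT hu))).hasDerivWithinAt
  have hqODE : ∀ u ∈ Ico (v 0 / c) T,
      HasDerivWithinAt q (signalField c h' n u (q u)) (Ici u) u := fun u hu =>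
    (hh'.hasDerivAt_signalField hv' hd₁ hc hq (h0 ▸ hu.1) (hn0 _ (hqT hu))).hasDerivWithinAt
  have hqErr : ∀ u ∈ Ico (v 0 / c) T,
      dist (signalField c h' n u (q u)) (signalField c h n u (q u)) ≤ ε * S := fun u hu => by
    have hsq := hq.sub_eq u
    exact abs_signalField_sub_signalField_le hc_pos hn.pos (hn.le_apply _ (hqT hu))
      (hsq ▸ div_nonneg (hd₁.le.trans (hv'.lower _)) hc_pos.le)
      (hsq ▸ div_le_div_of_nonneg_right (hv'.upper _) hc_pos.le) (hS u (hIco hu))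
  have hgron := dist_le_of_approx_trajectories_ODE_of_mem (s := fun _ => Icc 0 T)
    (K := K.toNNReal)
    (fun u hu => lipschitzOnWith_signalField hc_pos.le hn (hIco hu) (hB u (hIco hu)))
    hp.continuous.continuousOn hpODE (fun u _ => (dist_self _).le) hpT
    hq.continuous.continuousOn hqODE hqErr hqT
    (by rw [hp.apply_arrival_zero, h0, hq.apply_arrival_zero, dist_self]) s hs
  rw [Real.coe_toNNReal _ hK, zero_add, Real.dist_eq] at hgron
  calc |p s - q s| ≤ gronwallBound 0 K (ε * S) (s - v 0 / c) := hgron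
    _ ≤ gronwallBound 0 K (ε * S) T :=
      gronwallBound_mono le_rfl (by have := hn.pos; positivity) hK (by linarith [hs.2])
    _ = gronwallBound 0 K ε T * S := gronwallBound_zero_mul _ _ _ _

end IsRetardedSignal

theorem exists_abs_sub_le_of_isRetardedSignal {c c₀ d₁ d₀ T η M : ℝ} {L : ℝ≥0} {n : ℝ → ℝ}
    (hc₀ : 0 ≤ c₀) (hc : c₀ < c) (hd₁ : 0 < d₁) (hd : d₁ ≤ d₀) (hn : ProfileBounds T η M L n) :
    ∃ C > 0, ∀ v v' h h' : ℝ → ℝ, ∀ S : ℝ,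
      IsAdmissibleDistance c₀ d₁ d₀ v → IsAdmissibleDistance c₀ d₁ d₀ v' →
      IsRetardedSignal c v n h → IsRetardedSignal c v' n h' →
      (∀ s ∈ Icc 0 T, |h s - h' s| ≤ S) →
      ∀ t, 0 ≤ t → t + d₀ / c ≤ T → |v t - v' t| ≤ C * S := by
  have hc_pos : 0 < c := hc₀.trans_lt hc
  have hd₀ : 0 < d₀ := hd₁.trans_le hd
  set δ := c / (4 * π * d₀ * (c + c₀)) * η
  set B := c / (4 * π * d₁ * (c - c₀)) * M
  set G := gronwallBound 0 (4 * π * c * B * (1 / η + T * L / η ^ 2)) (4 * π * d₀ / η) T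
  have hδ : 0 < δ := by
    have := hn.pos
    positivity
  refine ⟨max (d₀ / δ) ((c + c₀) * G), lt_max_of_lt_left (div_pos hd₀ hδ), ?_⟩
  intro v v' h h' S hv hv' hh hh' hS t ht htT
  have hT : d₀ / c ≤ T := by linarith
  have hS₀ : 0 ≤ S := (abs_nonneg _).trans (hS 0 ⟨le_rfl, (div_nonneg hd₀.le hc_pos.le).trans hT⟩)
  rcases le_or_gt δ S with hSδ | hSδ
  · calc |v t - v' t| ≤ d₀ := abs_sub_le_iff.2
          ⟨by linarith [hv.upper t, hv'.lower t], by linarith [hv'.upper t, hv.lower t]⟩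
      _ ≤ d₀ / δ * S := by
        rw [div_mul_eq_mul_div, le_div_iff₀ hδ]
        exact mul_le_mul_of_nonneg_left hSδ hd₀.le
      _ ≤ _ := mul_le_mul_of_nonneg_right (le_max_left _ _) hS₀
  have h0 := hh.eq_of_abs_sub_lt hh' hv hv' hd₁ hc hn hT fun s hs => (hS s hs).trans_lt hSδ
  obtain ⟨p, hp⟩ := hv.exists_isRetardedTime hc
  obtain ⟨q, hq⟩ := hv'.exists_isRetardedTime hc
  have hs : t + v t / c ∈ Icc (v 0 / c) T :=
    ⟨by simpa using (hv.strictMono_arrival hc).monotone ht,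
      by linarith [div_le_div_of_nonneg_right (hv.upper t) hc_pos.le]⟩
  calc |v t - v' t| = |v (p (t + v t / c)) - v' (p (t + v t / c))| := by rw [hp.apply_arrival]
    _ ≤ (c + c₀) * |p (t + v t / c) - q (t + v t / c)| :=
      abs_sub_le_of_isRetardedTime hc_pos hv' hp hq _
    _ ≤ (c + c₀) * (G * S) := by
      gcongr
      exact hh.abs_retardedTime_sub_le hh' hv hv' hd₁ hc hn (fun s hs => hh.abs_le hv hd₁ hc hn hs)
        hp hq h0 hS hs
    _ ≤ _ := by
      rw [← mul_assoc]
      exact mul_le_mul_of_nonneg_right (le_max_right _ _) hS₀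

theorem stmt_10_general (c c₀ a₀ d₁ d₀ T₀ : ℝ)
    (hc₀ : 0 < c₀) (hc₀c : c₀ < c)
    (hd₁ : 0 < d₁) (hd₁d₀ : d₁ ≤ d₀)
    (x ν : E3) (f : ℝ → E3) (hf : ContDiff ℝ 1 f)
    (hη : 0 < sInf ((fun t : ℝ => ninf (cross3 (f t) ν)) '' Set.Icc 0 (T₀ + d₀ / c))) :
    ∃ C₁ > (0 : ℝ), ∀ a a' : ℝ → E3,
      ContDiff ℝ 2 a → ContDiff ℝ 2 a' →
      (∀ t : ℝ, ‖deriv a t‖ ≤ c₀) → (∀ t : ℝ, ‖deriv a' t‖ ≤ c₀) →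
      (∀ t : ℝ, ‖deriv (deriv a) t‖ ≤ a₀) → (∀ t : ℝ, ‖deriv (deriv a') t‖ ≤ a₀) →
      (∀ t : ℝ, d₁ ≤ ‖x - a t‖ ∧ ‖x - a t‖ ≤ d₀) →
      (∀ t : ℝ, d₁ ≤ ‖x - a' t‖ ∧ ‖x - a' t‖ ≤ d₀) →
      ∀ Hν Hν' : ℝ → E3,
        tangentialField c x a f ν Hν → tangentialField c x a' f ν Hν' →
        ∀ t ∈ Set.Icc (0 : ℝ) T₀,
          |‖x - a t‖ - ‖x - a' t‖| ≤
            C₁ * sSup ((fun s : ℝ => ninf (Hν s - Hν' s)) '' Set.Icc 0 (T₀ + d₀ / c)) := by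
  obtain ⟨M, L, hn⟩ := exists_profileBounds hf ν hη
  obtain ⟨C, hC, hstab⟩ := exists_abs_sub_le_of_isRetardedSignal hc₀.le hc₀c hd₁ hd₁d₀ hn
  refine ⟨C, hC, fun a a' ha ha' hda hda' _ _ hd hd' H H' hH hH' t ht => ?_⟩
  have hv := isAdmissibleDistance_norm_sub (ha.differentiable two_ne_zero) hda hd₁ hd
  have hv' := isAdmissibleDistance_norm_sub (ha'.differentiable two_ne_zero) hda' hd₁ hd'
  have hh := hH.isRetardedSignal (hc₀.trans hc₀c).le fun t => (hv.add_deriv_pos hc₀c t).le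
  have hh' := hH'.isRetardedSignal (hc₀.trans hc₀c).le fun t => (hv'.add_deriv_pos hc₀c t).le
  have hbdd : BddAbove ((fun s => ninf (H s - H' s)) '' Icc 0 (T₀ + d₀ / c)) :=
    ⟨_, forall_mem_image.2 fun s hs => (ninf_sub_le _ _).trans <| add_le_add
      ((le_abs_self _).trans (hh.abs_le hv hd₁ hc₀c hn hs))
      ((le_abs_self _).trans (hh'.abs_le hv' hd₁ hc₀c hn hs))⟩
  exact hstab _ _ _ _ _ hv hv' hh hh'
    (fun s hs => (abs_ninf_sub_ninf_le _ _).trans (le_csSup hbdd (mem_image_of_mem _ hs)))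
    t ht.1 (by linarith [ht.2])

/-- **Stability of the distance function.** There is a constant `C₁ > 0`,
depending only on `c, c₀, a₀, d₁, d₀, f, ν, T`, such that for any two admissible orbits
`a, a'` the distance functions satisfy
`sup_{t∈[0,T₀]} |v t − v' t| ≤ C₁ · sup_{s∈[0,T]} ‖Hν s − Hν' s‖_∞`. -/
theorem stmt_10 (c c₀ a₀ d₁ d₀ T₀ : ℝ)
    (hc₀ : 0 < c₀) (hc₀c : c₀ < c) (ha₀ : 0 < a₀)
    (hd₁ : 0 < d₁) (hd₁d₀ : d₁ ≤ d₀) (hT₀ : 0 < T₀)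
    (x ν : E3) (f : ℝ → E3) (hf : ContDiff ℝ 1 f)
    (hη : 0 < sInf ((fun t : ℝ => ninf (cross3 (f t) ν)) '' Set.Icc 0 (T₀ + d₀ / c))) :
    ∃ C₁ > (0 : ℝ), ∀ a a' : ℝ → E3,
      ContDiff ℝ 2 a → ContDiff ℝ 2 a' →
      (∀ t : ℝ, ‖deriv a t‖ ≤ c₀) → (∀ t : ℝ, ‖deriv a' t‖ ≤ c₀) →
      (∀ t : ℝ, ‖deriv (deriv a) t‖ ≤ a₀) → (∀ t : ℝ, ‖deriv (deriv a') t‖ ≤ a₀) →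
      (∀ t : ℝ, d₁ ≤ ‖x - a t‖ ∧ ‖x - a t‖ ≤ d₀) →
      (∀ t : ℝ, d₁ ≤ ‖x - a' t‖ ∧ ‖x - a' t‖ ≤ d₀) →
      ∀ Hν Hν' : ℝ → E3,
        tangentialField c x a f ν Hν → tangentialField c x a' f ν Hν' →
        ∀ t ∈ Set.Icc (0 : ℝ) T₀,
          |‖x - a t‖ - ‖x - a' t‖| ≤
            C₁ * sSup ((fun s : ℝ => ninf (Hν s - Hν' s)) '' Set.Icc 0 (T₀ + d₀ / c)) :=
  stmt_10_general c c₀ a₀ d₁ d₀ T₀ hc₀ hc₀c hd₁ hd₁d₀ x ν f hf hη
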